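/- arXiv:2605.08091 — 2 statements merged into one kernel-verified Lean document; each statement's English description precedes it below -/
import Mathlib

section
/- Conversely, if Dᵢ ∈ ℂ^{rᵢ×d} have orthonormal rows and for every pair of cyclically consecutive indices the product conj(Dᵢ) D_{i+1}ᵀ is a nonzero scalar multiple σᵢ Wᵢ of a matrix Wᵢ with orthonormal rows (σᵢ > 0), then Cov = D₁ᵀ conj(D₁) ⋯ D_cᵀ conj(D_c) D₁ᵀ conj(D₁) is nonzero. -/
open Matrix

/-- The orthogonal projection `Dᵀ conj(D)` onto the row space of `conj(D)`. -/
noncomputable def projOf {r d : ℕ} (D : Matrix (Fin r) (Fin d) ℂ) : Matrix (Fin d) (Fin d) ℂ :=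
  Dᵀ * D.map star

private lemma map_star_mul {m n p : ℕ} (A : Matrix (Fin m) (Fin n) ℂ)
    (B : Matrix (Fin n) (Fin p) ℂ) :
    (A * B).map star = A.map star * B.map star := by
  ext i j
  simp [Matrix.mul_apply, Matrix.map_apply, star_sum, star_mul']

private lemma conj_mul_transpose {m d : ℕ} (A : Matrix (Fin m) (Fin d) ℂ)
    (hA : A * Aᴴ = 1) : A.map star * Aᵀ = 1 := by
  have h1 : (A * Aᴴ).map star = (1 : Matrix (Fin m) (Fin m) ℂ).map (star : ℂ → ℂ) := by
    rw [hA]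
  rw [map_star_mul] at h1
  have h2 : Aᴴ.map star = Aᵀ := by
    ext i j
    simp [Matrix.conjTranspose_apply, Matrix.map_apply]
  have h3 : (1 : Matrix (Fin m) (Fin m) ℂ).map (star : ℂ → ℂ) = 1 := by
    ext i j
    by_cases h : i = j <;> simp [Matrix.one_apply, h, Matrix.map_apply]
  rwa [h2, h3] at h1

private lemma key_lemma (d : ℕ) : ∀ (n : ℕ) (r : Fin (n + 1) → ℕ)
    (D : ∀ i, Matrix (Fin (r i)) (Fin d) ℂ)
    (_hD : ∀ i, D i * (D i)ᴴ = 1)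
    (_hlink : ∀ i : Fin n, ∃ σ : ℝ, 0 < σ ∧
      ∃ W : Matrix (Fin (r i.castSucc)) (Fin (r i.succ)) ℂ,
        W * Wᴴ = 1 ∧ (D i.castSucc).map star * (D i.succ)ᵀ = (σ : ℂ) • W),
    ∃ s : ℝ, 0 < s ∧ ∃ V : Matrix (Fin (r 0)) (Fin (r (Fin.last n))) ℂ,
      V * Vᴴ = 1 ∧
      (D 0).map star * (List.ofFn fun i => projOf (D i)).prod
        = (s : ℂ) • (V * (D (Fin.last n)).map star) := by
  intro n
  induction n with
  | zero =>
    intro r D hD _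
    refine ⟨1, one_pos, (1 : Matrix (Fin (r 0)) (Fin (r 0)) ℂ), by simp, ?_⟩
    simp only [List.ofFn_succ, List.ofFn_zero, List.prod_cons, List.prod_nil, mul_one]
    show (D 0).map star * projOf (D 0)
      = ((1 : ℝ) : ℂ) • ((1 : Matrix (Fin (r 0)) (Fin (r 0)) ℂ) * (D 0).map star)
    rw [projOf, ← Matrix.mul_assoc, conj_mul_transpose (D 0) (hD 0)]
    simp
  | succ n ih =>
    intro r D hD hlink
    obtain ⟨s, hs, V, hV, hmain⟩ := ih (fun i => r i.castSucc) (fun i => D i.castSucc)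
      (fun i => hD i.castSucc)
      (fun i => by
        have h := hlink i.castSucc
        rw [Fin.succ_castSucc] at h
        exact h)
    have hlk' := hlink (Fin.last n)
    rw [Fin.succ_last] at hlk'
    obtain ⟨σ, hσ, W, hW, hlk⟩ := hlk'
    refine ⟨s * σ, mul_pos hs hσ, V * W, ?_, ?_⟩
    · have hVW : V * W * (V * W)ᴴ = 1 := by
        rw [Matrix.conjTranspose_mul, Matrix.mul_assoc, ← Matrix.mul_assoc W, hW, Matrix.one_mul, hV]
      exact hVW
    · have hsplit : (List.ofFn fun i : Fin (n + 2) => projOf (D i)).prod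
          = (List.ofFn fun i : Fin (n + 1) => projOf (D i.castSucc)).prod
            * projOf (D (Fin.last (n + 1))) := by
        rw [List.ofFn_succ' fun i : Fin (n + 2) => projOf (D i), List.prod_concat]
      have hmain' : (D (0 : Fin (n + 2))).map star
            * (List.ofFn fun i : Fin (n + 1) => projOf (D i.castSucc)).prod
          = (s : ℂ) • (V * (D ((Fin.last n).castSucc)).map star) := hmain
      have key : (s : ℂ) • (V * (D ((Fin.last n).castSucc)).map star)
            * ((D (Fin.last n.succ))ᵀ * (D (Fin.last n.succ)).map star)
          = ((s * σ : ℝ) : ℂ) • (V * W * (D (Fin.last n.succ)).map star) := by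
        rw [Matrix.smul_mul,
          Matrix.mul_assoc V, ← Matrix.mul_assoc ((D ((Fin.last n).castSucc)).map star),
          hlk, Matrix.smul_mul, Matrix.mul_smul, smul_smul, ← Matrix.mul_assoc V]
        push_cast
        ring_nf
      rw [hsplit, ← Matrix.mul_assoc, hmain', projOf]
      exact key

/-- If each `D i` has orthonormal rows (with at least one row) and every cyclically
consecutive product `conj(D i) * D (i+1)ᵀ` is a positive scalar multiple `σ W` of a
matrix `W` with orthonormal rows, then
`Cov = P 0 * P 1 * ⋯ * P c * P 0 ≠ 0`, where `P i = (D i)ᵀ conj(D i)`. -/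
theorem stmt11 (c d : ℕ) (r : Fin (c + 1) → ℕ) (hr : ∀ i, 0 < r i)
    (D : ∀ i, Matrix (Fin (r i)) (Fin d) ℂ)
    (hD : ∀ i, D i * (D i)ᴴ = 1)
    (hlink : ∀ i : Fin (c + 1), ∃ σ : ℝ, 0 < σ ∧
      ∃ W : Matrix (Fin (r i)) (Fin (r (i + 1))) ℂ,
        W * Wᴴ = 1 ∧ (D i).map star * (D (i + 1))ᵀ = (σ : ℂ) • W) :
    (List.ofFn fun i => projOf (D i)).prod * projOf (D 0) ≠ 0 := by
  obtain ⟨s, hs, V, hV, hmain⟩ := key_lemma d c r D hD (fun i => by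
    have h := hlink i.castSucc
    have e1 : (i.castSucc : Fin (c + 1)) + 1 = i.succ := by
      ext; simp [Fin.val_add_one_of_lt]
    rw [e1] at h
    exact h)
  have hlk' := hlink (Fin.last c)
  rw [Fin.last_add_one] at hlk'
  obtain ⟨σ, hσ, W, hW, hlk⟩ := hlk'
  intro hzero
  have hM : (D 0).map star * ((List.ofFn fun i => projOf (D i)).prod * projOf (D 0)) * (D 0)ᵀ
      = 0 := by rw [hzero]; simp
  rw [← Matrix.mul_assoc, hmain, projOf, Matrix.smul_mul, Matrix.smul_mul,
    ← Matrix.mul_assoc (V * (D (Fin.last c)).map star),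
    Matrix.mul_assoc V ((D (Fin.last c)).map star) (D 0)ᵀ, hlk, Matrix.mul_smul,
    Matrix.smul_mul, Matrix.smul_mul, Matrix.mul_assoc (V * W),
    conj_mul_transpose (D 0) (hD 0), Matrix.mul_one, smul_smul] at hM
  have hne : ((s : ℂ)) * (σ : ℂ) ≠ 0 :=
    mul_ne_zero (by exact_mod_cast hs.ne') (by exact_mod_cast hσ.ne')
  rw [smul_eq_zero] at hM
  rcases hM with h | h
  · exact hne h
  · have h1 : V * W * (V * W)ᴴ = 0 := by rw [h]; simp
    rw [Matrix.conjTranspose_mul, Matrix.mul_assoc, ← Matrix.mul_assoc W, hW, Matrix.one_mul, hV] at h1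
    haveI : Nonempty (Fin (r 0)) := ⟨⟨0, hr 0⟩⟩
    exact one_ne_zero h1
end

section
/- Let P₁, P₂, P₃ be orthogonal projections on ℂ^d such that each product Pᵢ Pⱼ Pᵢ (i ≠ j) equals σᵢⱼ² Pᵢ for positive scalars σᵢⱼ. Then the operator Cov = P₁ P₃ P₂ P₁ restricted to range(P₁) is a normal operator on range(P₁) whose singular values (as an operator on range(P₁)) all equal σ₁₃ σ₃₂ σ₂₁. -/
open Matrix

private lemma key_prod {d : ℕ} (A B C : Matrix (Fin d) (Fin d) ℂ) (a b c : ℂ)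
    (hAA : A * A = A)
    (hCAC : C * A * C = c • C)
    (hBCB : B * C * B = b • B)
    (hABA : A * B * A = a • A) :
    (A * B * C * A) * (A * C * B * A) = (c * (b * a)) • A := by
  calc (A * B * C * A) * (A * C * B * A)
      = A * B * (C * A * C) * B * A := by
        rw [show (A * B * C * A) * (A * C * B * A) = A * B * (C * (A * A) * C) * B * A by
          simp only [mul_assoc], hAA]
    _ = c • (A * (B * C * B) * A) := by
        rw [hCAC]
        simp only [mul_smul_comm, smul_mul_assoc, mul_assoc]
    _ = (c * (b * a)) • A := by
        rw [hBCB]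
        simp only [mul_smul_comm, smul_mul_assoc, hABA, smul_smul]

private lemma trace_zero_aux {d : ℕ} {A : Matrix (Fin d) (Fin d) ℂ}
    (hA : Aᴴ = A) (hAA : A * A = A) (ht : A.trace = 0) : A = 0 := by
  have h2 : (Aᴴ * A).trace = 0 := by rw [hA, hAA, ht]
  have h3 : ((∑ i, ∑ j, Complex.normSq (A j i) : ℝ) : ℂ) = 0 := by
    rw [← h2]
    simp only [Matrix.trace, Matrix.diag, Matrix.mul_apply, Matrix.conjTranspose_apply]
    push_cast
    refine Finset.sum_congr rfl fun i _ => Finset.sum_congr rfl fun j _ => ?_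
    rw [Complex.normSq_eq_conj_mul_self, Complex.star_def]
  have h4 : (∑ i, ∑ j, Complex.normSq (A j i) : ℝ) = 0 := by exact_mod_cast h3
  have h5 : ∀ i ∈ Finset.univ, ∀ j ∈ Finset.univ, Complex.normSq (A j i) = 0 := by
    have := (Finset.sum_eq_zero_iff_of_nonneg (fun i _ =>
      Finset.sum_nonneg fun j _ => Complex.normSq_nonneg _)).mp h4
    intro i hi j hj
    exact (Finset.sum_eq_zero_iff_of_nonneg
      (fun j _ => Complex.normSq_nonneg _)).mp (this i hi) j hj
  ext i j
  simpa using Complex.normSq_eq_zero.mp (h5 j (Finset.mem_univ _) i (Finset.mem_univ _))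

/-- Let `P 0, P 1, P 2` be orthogonal projections on `ℂ^d` with
`P i * P j * P i = σᵢⱼ² P i` for positive `σᵢⱼ` (all `i ≠ j`). Then
`Cov = P 0 * P 2 * P 1 * P 0` is normal and
`Covᴴ Cov = (σ₀₂ σ₂₁ σ₁₀)² P 0`, i.e. restricted to `range (P 0)` the operator `Cov`
is a scalar multiple of a unitary with all singular values equal to `σ₀₂ σ₂₁ σ₁₀`. -/
theorem stmt15 (d : ℕ) (P : Fin 3 → Matrix (Fin d) (Fin d) ℂ)
    (σ : Fin 3 → Fin 3 → ℝ)
    (hP : ∀ i, (P i)ᴴ = P i ∧ P i * P i = P i)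
    (hσ : ∀ i j, i ≠ j → 0 < σ i j)
    (h : ∀ i j, i ≠ j → P i * P j * P i = (((σ i j) ^ 2 : ℝ) : ℂ) • P i) :
    (P 0 * P 2 * P 1 * P 0) * (P 0 * P 2 * P 1 * P 0)ᴴ =
      (P 0 * P 2 * P 1 * P 0)ᴴ * (P 0 * P 2 * P 1 * P 0) ∧
    (P 0 * P 2 * P 1 * P 0)ᴴ * (P 0 * P 2 * P 1 * P 0) =
      (((σ 0 2 * σ 2 1 * σ 1 0) ^ 2 : ℝ) : ℂ) • P 0 := by
  obtain ⟨h0, h0i⟩ := hP 0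
  obtain ⟨h1, h1i⟩ := hP 1
  obtain ⟨h2, h2i⟩ := hP 2
  have hCov : (P 0 * P 2 * P 1 * P 0)ᴴ = P 0 * P 1 * P 2 * P 0 := by
    simp only [conjTranspose_mul, h0, h1, h2, mul_assoc]
  set c1 : ℂ := ((σ 2 0 ^ 2 : ℝ) : ℂ) * (((σ 1 2 ^ 2 : ℝ) : ℂ) * ((σ 0 1 ^ 2 : ℝ) : ℂ))
  set c2 : ℂ := ((σ 1 0 ^ 2 : ℝ) : ℂ) * (((σ 2 1 ^ 2 : ℝ) : ℂ) * ((σ 0 2 ^ 2 : ℝ) : ℂ))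
  have e1 : (P 0 * P 1 * P 2 * P 0) * (P 0 * P 2 * P 1 * P 0) = c1 • P 0 :=
    key_prod (P 0) (P 1) (P 2) _ _ _ h0i
      (h 2 0 (by decide)) (h 1 2 (by decide)) (h 0 1 (by decide))
  have e2 : (P 0 * P 2 * P 1 * P 0) * (P 0 * P 1 * P 2 * P 0) = c2 • P 0 :=
    key_prod (P 0) (P 2) (P 1) _ _ _ h0i
      (h 1 0 (by decide)) (h 2 1 (by decide)) (h 0 2 (by decide))
  have hceq : c1 • P 0 = c2 • P 0 := by
    by_cases hz : (P 0).trace = 0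
    · rw [trace_zero_aux h0 h0i hz, smul_zero, smul_zero]
    · have htr : ((P 0 * P 1 * P 2 * P 0) * (P 0 * P 2 * P 1 * P 0)).trace =
          ((P 0 * P 2 * P 1 * P 0) * (P 0 * P 1 * P 2 * P 0)).trace :=
        Matrix.trace_mul_comm _ _
      rw [e1, e2, Matrix.trace_smul, Matrix.trace_smul] at htr
      have : c1 = c2 := by
        simp only [smul_eq_mul, mul_eq_mul_right_iff] at htr
        rcases htr with h' | h'
        · exact h'
        · exact absurd h' hz
      rw [this]
  have hc2 : c2 = (((σ 0 2 * σ 2 1 * σ 1 0) ^ 2 : ℝ) : ℂ) := by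
    simp only [c2]; push_cast; ring
  constructor
  · rw [hCov, e1, e2, hceq]
  · rw [hCov, e1, hceq, hc2]
end
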